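/- arXiv:2509.03899 — 3 statements merged into one kernel-verified Lean document; each statement's English description precedes it below -/
import Mathlib

section
/- Let h : ℝⁿ → ℝ be L_h-Lipschitz and f : ℝⁿ → ℝⁿ be L_f-Lipschitz, and let α, ᾱ ∈ [0,1] with α ≤ ᾱ, δ ≥ 0. Suppose C ⊆ ℝⁿ and D ⊆ C is an ε-net of C (for every x ∈ C there exists x̄ ∈ D with ‖x - x̄‖ ≤ ε), that h(x̄) ≤ γ for all x̄ ∈ D where γ ≤ 0, that h(f(x̄)) - h(x̄) ≤ -α·h(x̄) - δ for all x̄ ∈ D, and that ε ≤ (δ + (ᾱ - α)·|γ|)/(L_h·L_f + (1-ᾱ)·L_h). Then h(f(x)) - h(x) ≤ -ᾱ·h(x) for all x ∈ C. -/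
/-- ε-net verification of the barrier decay property on a segment C with level γ ≤ 0. -/
theorem stmt_2 (n : ℕ)
    (h : EuclideanSpace ℝ (Fin n) → ℝ)
    (f : EuclideanSpace ℝ (Fin n) → EuclideanSpace ℝ (Fin n))
    (Lh Lf : ℝ) (hLh : 0 < Lh) (hLf : 0 < Lf)
    (hLiph : ∀ x y, |h x - h y| ≤ Lh * ‖x - y‖)
    (hLipf : ∀ x y, ‖f x - f y‖ ≤ Lf * ‖x - y‖)
    (α αb δ γ ε : ℝ)
    (hα : 0 ≤ α) (hα1 : α ≤ 1) (hααb : α ≤ αb) (hαb1 : αb ≤ 1)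
    (hδ : 0 ≤ δ) (hγ : γ ≤ 0)
    (C D : Set (EuclideanSpace ℝ (Fin n)))
    (hnet : ∀ x ∈ C, ∃ xb ∈ D, ‖x - xb‖ ≤ ε)
    (hlev : ∀ xb ∈ D, h xb ≤ γ)
    (hdec : ∀ xb ∈ D, h (f xb) - h xb ≤ -α * h xb - δ)
    (hε : ε ≤ (δ + (αb - α) * |γ|) / (Lh * Lf + (1 - αb) * Lh)) :
    ∀ x ∈ C, h (f x) - h x ≤ -αb * h x := by
  intro x hx
  obtain ⟨xb, hxbD, hd⟩ := hnet x hx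
  have hεnn : 0 ≤ ε := le_trans (norm_nonneg _) hd
  have hden : 0 < Lh * Lf + (1 - αb) * Lh := by nlinarith
  have hε' : ε * (Lh * Lf + (1 - αb) * Lh) ≤ δ + (αb - α) * |γ| :=
    (le_div_iff₀ hden).mp hε
  have hγabs : |γ| = -γ := abs_of_nonpos hγ
  have h1 : |h (f x) - h (f xb)| ≤ Lh * (Lf * ε) := by
    calc |h (f x) - h (f xb)| ≤ Lh * ‖f x - f xb‖ := hLiph _ _
    _ ≤ Lh * (Lf * ε) := by
        have := (hLipf x xb).trans (by nlinarith : Lf * ‖x - xb‖ ≤ Lf * ε)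
        nlinarith
  have h2 : |h x - h xb| ≤ Lh * ε := by
    calc |h x - h xb| ≤ Lh * ‖x - xb‖ := hLiph _ _
    _ ≤ Lh * ε := by nlinarith
  have h3 := hlev xb hxbD
  have h4 := hdec xb hxbD
  have h1' := abs_le.mp h1
  have h2' := abs_le.mp h2
  nlinarith [h1'.1, h1'.2, h2'.1, h2'.2]
end

section
/- Let h : ℝⁿ → ℝ be L_h-Lipschitz, f : ℝⁿ → ℝⁿ be L_f-Lipschitz, α ∈ [0,1], ᾱ ∈ [α,1], δ ≥ 0, and γ ≤ 0. Suppose x̄ ∈ ℝⁿ satisfies h(x̄) ≤ γ and h(f(x̄)) - h(x̄) ≤ -α·h(x̄) - δ, and x ∈ ℝⁿ satisfies ‖x - x̄‖ ≤ ε with ε = (δ + (ᾱ-α)(-γ))/(L_h·L_f + (1-ᾱ)·L_h). Then h(f(x)) ≤ (1-ᾱ)·(L_h·L_f + (1-α)·L_h)/(L_h·L_f + (1-ᾱ)·L_h) · γ + ((ᾱ-1)·L_h)/(L_h·L_f + (1-ᾱ)·L_h) · δ. -/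
theorem le_add_mul_norm_sub_of_lipschitz_comp {E F : Type*}
    [SeminormedAddCommGroup E] [SeminormedAddCommGroup F]
    {h : F → ℝ} {f : E → F} {Lh Lf : ℝ} (hLh : 0 ≤ Lh)
    (hLiph : ∀ x y, |h x - h y| ≤ Lh * ‖x - y‖)
    (hLipf : ∀ x y, ‖f x - f y‖ ≤ Lf * ‖x - y‖) (x y : E) :
    h (f x) ≤ h (f y) + Lh * Lf * ‖x - y‖ := by
  have hdiff := calc
    h (f x) - h (f y) ≤ |h (f x) - h (f y)| := le_abs_self _
    _ ≤ Lh * ‖f x - f y‖ := hLiph _ _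
    _ ≤ Lh * (Lf * ‖x - y‖) := mul_le_mul_of_nonneg_left (hLipf _ _) hLh
  linarith

theorem level_bound_eq {Lh Lf α αb δ γ : ℝ} (hD : Lh * Lf + (1 - αb) * Lh ≠ 0) :
    (1 - α) * γ - δ + Lh * Lf * ((δ + (αb - α) * (-γ)) / (Lh * Lf + (1 - αb) * Lh)) =
      (1 - αb) * (Lh * Lf + (1 - α) * Lh) / (Lh * Lf + (1 - αb) * Lh) * γ +
        ((αb - 1) * Lh) / (Lh * Lf + (1 - αb) * Lh) * δ := by
  linear_combination (δ - (1 - α) * γ) * mul_inv_cancel₀ hD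

theorem stmt_8_general (n : ℕ)
    (h : EuclideanSpace ℝ (Fin n) → ℝ)
    (f : EuclideanSpace ℝ (Fin n) → EuclideanSpace ℝ (Fin n))
    (Lh Lf : ℝ) (hLh : 0 < Lh) (hLf : 0 < Lf)
    (hLiph : ∀ x y, |h x - h y| ≤ Lh * ‖x - y‖)
    (hLipf : ∀ x y, ‖f x - f y‖ ≤ Lf * ‖x - y‖)
    (α αb δ γ : ℝ)
    (hα1 : α ≤ 1) (hαb1 : αb ≤ 1)
    (x xb : EuclideanSpace ℝ (Fin n))
    (hlev : h xb ≤ γ)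
    (hdec : h (f xb) - h xb ≤ -α * h xb - δ)
    (hclose : ‖x - xb‖ ≤ (δ + (αb - α) * (-γ)) / (Lh * Lf + (1 - αb) * Lh)) :
    h (f x) ≤ (1 - αb) * (Lh * Lf + (1 - α) * Lh) / (Lh * Lf + (1 - αb) * Lh) * γ +
      ((αb - 1) * Lh) / (Lh * Lf + (1 - αb) * Lh) * δ := by
  have hD : 0 < Lh * Lf + (1 - αb) * Lh := by nlinarith
  have hsample : h (f xb) ≤ (1 - α) * γ - δ := by nlinarith
  rw [← level_bound_eq hD.ne']
  calc h (f x) ≤ h (f xb) + Lh * Lf * ‖x - xb‖ :=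
        le_add_mul_norm_sub_of_lipschitz_comp hLh.le hLiph hLipf x xb
    _ ≤ (1 - α) * γ - δ + Lh * Lf * ((δ + (αb - α) * (-γ)) / (Lh * Lf + (1 - αb) * Lh)) := by
        gcongr

/-- Single-step level propagation bound for a sampled point xb near x. -/
theorem stmt_8 (n : ℕ)
    (h : EuclideanSpace ℝ (Fin n) → ℝ)
    (f : EuclideanSpace ℝ (Fin n) → EuclideanSpace ℝ (Fin n))
    (Lh Lf : ℝ) (hLh : 0 < Lh) (hLf : 0 < Lf)
    (hLiph : ∀ x y, |h x - h y| ≤ Lh * ‖x - y‖)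
    (hLipf : ∀ x y, ‖f x - f y‖ ≤ Lf * ‖x - y‖)
    (α αb δ γ : ℝ)
    (hα : 0 ≤ α) (hα1 : α ≤ 1) (hααb : α ≤ αb) (hαb1 : αb ≤ 1)
    (hδ : 0 ≤ δ) (hγ : γ ≤ 0)
    (x xb : EuclideanSpace ℝ (Fin n))
    (hlev : h xb ≤ γ)
    (hdec : h (f xb) - h xb ≤ -α * h xb - δ)
    (hclose : ‖x - xb‖ ≤ (δ + (αb - α) * (-γ)) / (Lh * Lf + (1 - αb) * Lh)) :
    h (f x) ≤ (1 - αb) * (Lh * Lf + (1 - α) * Lh) / (Lh * Lf + (1 - αb) * Lh) * γ +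
      ((αb - 1) * Lh) / (Lh * Lf + (1 - αb) * Lh) * δ :=
  stmt_8_general n h f Lh Lf hLh hLf hLiph hLipf α αb δ γ hα1 hαb1 x xb hlev hdec hclose
end

section
/- Let h : ℝⁿ → ℝ and f : ℝⁿ → ℝⁿ be Lipschitz with constants L_h and L_f respectively, let α, ᾱ ∈ [0,1] with α ≤ ᾱ, δ ≥ 0, γ ≤ 0, and let C = {x : γ' ≤ h(x) ≤ γ} for some γ' ≤ γ. Define the good set C^g = {x ∈ C : h(f(x)) - h(x) + α·h(x) ≤ -δ}. Suppose every point of C is within distance ε of some point of C^g, with ε ≤ (δ + (ᾱ-α)·(-γ))/(L_h·L_f + (1-ᾱ)·L_h). Then h(f(x)) - h(x) ≤ -ᾱ·h(x) for all x ∈ C. -/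
/-- Continuous-covering version of the ε-net verification on a segment C. -/
theorem stmt_13 (n : ℕ)
    (h : EuclideanSpace ℝ (Fin n) → ℝ)
    (f : EuclideanSpace ℝ (Fin n) → EuclideanSpace ℝ (Fin n))
    (Lh Lf : ℝ) (hLh : 0 < Lh) (hLf : 0 < Lf)
    (hLiph : ∀ x y, |h x - h y| ≤ Lh * ‖x - y‖)
    (hLipf : ∀ x y, ‖f x - f y‖ ≤ Lf * ‖x - y‖)
    (α αb δ γ γ' ε : ℝ)
    (hα : 0 ≤ α) (hα1 : α ≤ 1) (hααb : α ≤ αb) (hαb1 : αb ≤ 1)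
    (hδ : 0 ≤ δ) (hγ : γ ≤ 0) (hγ' : γ' ≤ γ)
    (hcov : ∀ x ∈ {x | γ' ≤ h x ∧ h x ≤ γ},
      ∃ xb ∈ {x | (γ' ≤ h x ∧ h x ≤ γ) ∧ h (f x) - h x + α * h x ≤ -δ}, ‖x - xb‖ ≤ ε)
    (hε : ε ≤ (δ + (αb - α) * (-γ)) / (Lh * Lf + (1 - αb) * Lh)) :
    ∀ x ∈ {x | γ' ≤ h x ∧ h x ≤ γ}, h (f x) - h x ≤ -αb * h x := by
  intro x hx
  obtain ⟨xb, ⟨⟨hb1, hb2⟩, hgood⟩, hdist⟩ := hcov x hx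
  set D : ℝ := Lh * Lf + (1 - αb) * Lh with hD
  have hDpos : 0 < D := by
    have h1 : 0 < Lh * Lf := mul_pos hLh hLf
    have h2 : 0 ≤ (1 - αb) * Lh := mul_nonneg (by linarith) hLh.le
    linarith
  have hεD : ε * D ≤ δ + (αb - α) * (-γ) := by
    have := (le_div_iff₀ hDpos).mp hε
    linarith
  -- h x ≤ h xb + Lh * ε and h xb ≤ h x + Lh * ε
  have hε0 : 0 ≤ ε := le_trans (norm_nonneg _) hdist
  have hhx : |h x - h xb| ≤ Lh * ε := by
    refine le_trans (hLiph x xb) ?_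
    exact mul_le_mul_of_nonneg_left hdist hLh.le
  have hfx : |h (f x) - h (f xb)| ≤ Lh * (Lf * ε) := by
    refine le_trans (hLiph (f x) (f xb)) ?_
    refine mul_le_mul_of_nonneg_left ?_ hLh.le
    refine le_trans (hLipf x xb) ?_
    exact mul_le_mul_of_nonneg_left hdist hLf.le
  have h1 := abs_le.mp hhx
  have h2 := abs_le.mp hfx
  -- key: (αb - α) * h xb ≤ (αb - α) * γ
  have hkey : (αb - α) * h xb ≤ (αb - α) * γ :=
    mul_le_mul_of_nonneg_left hb2 (by linarith)
  have hmono : (1 - αb) * (h xb - Lh * ε) ≤ (1 - αb) * h x :=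
    mul_le_mul_of_nonneg_left (by linarith [h1.1]) (by linarith)
  nlinarith [h2.1, hgood, hmono, hkey, hεD]
end
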